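/- arXiv:1203.5738 — 3 statements merged into one kernel-verified Lean document; each statement's English description precedes it below -/
import Mathlib

section
/- The map sending an r-colored partition Λ of [n] to the tuple (Λ_1, ..., Λ_r), where Λ_t is the uncolored partition of [n] whose arcs are exactly the t-colored arcs of Λ, is a bijection from r-colored partitions of [n] to r-tuples (P_1, ..., P_r) of partitions of [n] such that for any distinct i, j in [r], min(P_i) ∪ min(P_j) = [n] and max(P_i) ∪ max(P_j) = [n]. -/
open Finset

/-- `IsArc P i j` : `(i,j)` is an arc of the set partition `P`. -/
def IsArc {n : ℕ} (P : Finpartition (Finset.univ : Finset (Fin n))) (i j : Fin n) : Prop :=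
  i < j ∧ ∃ B ∈ P.parts, i ∈ B ∧ j ∈ B ∧ ∀ k ∈ B, i < k → j ≤ k

/-- The set of minimal elements of blocks of `P`. -/
def blockMin {n : ℕ} (P : Finpartition (Finset.univ : Finset (Fin n))) : Set (Fin n) :=
  {i | ∃ B ∈ P.parts, i ∈ B ∧ ∀ k ∈ B, i ≤ k}

/-- The set of maximal elements of blocks of `P`. -/
def blockMax {n : ℕ} (P : Finpartition (Finset.univ : Finset (Fin n))) : Set (Fin n) :=
  {i | ∃ B ∈ P.parts, i ∈ B ∧ ∀ k ∈ B, k ≤ i}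

/-- An `r`-colored partition of `[n]`. -/
structure ColoredPartition (n r : ℕ) where
  P : Finpartition (Finset.univ : Finset (Fin n))
  color : ∀ i j : Fin n, IsArc P i j → Fin r

/-- `Λ` has a `k`-crossing: `k` same-colored arcs with
`i₁ < ⋯ < i_k < j₁ < ⋯ < j_k`. -/
def HasCrossing {n r : ℕ} (Λ : ColoredPartition n r) (k : ℕ) : Prop :=
  ∃ (f g : Fin k → Fin n) (c : Fin r),
    StrictMono f ∧ StrictMono g ∧ (∀ s t : Fin k, f s < g t) ∧
    ∀ t, ∃ h : IsArc Λ.P (f t) (g t), Λ.color (f t) (g t) h = c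

/-- `Λ` has a `k`-nesting: `k` same-colored arcs with
`i₁ < ⋯ < i_k < j_k < ⋯ < j₁`. -/
def HasNesting {n r : ℕ} (Λ : ColoredPartition n r) (k : ℕ) : Prop :=
  ∃ (f g : Fin k → Fin n) (c : Fin r),
    StrictMono f ∧ StrictAnti g ∧ (∀ s t : Fin k, f s < g t) ∧
    ∀ t, ∃ h : IsArc Λ.P (f t) (g t), Λ.color (f t) (g t) h = c

/-- Uncolored `k`-crossing. -/
def HasCrossingP {n : ℕ} (P : Finpartition (Finset.univ : Finset (Fin n))) (k : ℕ) : Prop :=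
  ∃ f g : Fin k → Fin n, StrictMono f ∧ StrictMono g ∧ (∀ s t : Fin k, f s < g t) ∧
    ∀ t, IsArc P (f t) (g t)

/-- Uncolored `k`-nesting. -/
def HasNestingP {n : ℕ} (P : Finpartition (Finset.univ : Finset (Fin n))) (k : ℕ) : Prop :=
  ∃ f g : Fin k → Fin n, StrictMono f ∧ StrictAnti g ∧ (∀ s t : Fin k, f s < g t) ∧
    ∀ t, IsArc P (f t) (g t)

/-- The crossing number of a colored partition: the largest `k` with a `k`-crossing. -/
noncomputable def crNum {n r : ℕ} (Λ : ColoredPartition n r) : ℕ :=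
  sSup {k | 0 < k ∧ HasCrossing Λ k}

noncomputable def neNum {n r : ℕ} (Λ : ColoredPartition n r) : ℕ :=
  sSup {k | 0 < k ∧ HasNesting Λ k}

noncomputable def crNumP {n : ℕ} (P : Finpartition (Finset.univ : Finset (Fin n))) : ℕ :=
  sSup {k | 0 < k ∧ HasCrossingP P k}

noncomputable def neNumP {n : ℕ} (P : Finpartition (Finset.univ : Finset (Fin n))) : ℕ :=
  sSup {k | 0 < k ∧ HasNestingP P k}

/-- A matching: all blocks have at most two elements. -/
def IsMatching {m : ℕ} (P : Finpartition (Finset.univ : Finset (Fin m))) : Prop :=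
  ∀ B ∈ P.parts, B.card ≤ 2

/-- A complete matching: all blocks have exactly two elements. -/
def IsCompleteMatching {m : ℕ} (P : Finpartition (Finset.univ : Finset (Fin m))) : Prop :=
  ∀ B ∈ P.parts, B.card = 2

/-- `i ∈ [n] ↦ 2i ∈ [2n]` (0-based: the element of 1-based value `2(i+1)-1`). -/
def dbl {n : ℕ} (i : Fin n) : Fin (2 * n) := ⟨2 * i.1, by have := i.2; omega⟩

/-- `i ∈ [n] ↦` 0-based index `2i+1` of `[2n]` (1-based value `2(i+1)`). -/
def dbl1 {n : ℕ} (i : Fin n) : Fin (2 * n) := ⟨2 * i.1 + 1, by have := i.2; omega⟩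

/-- Enhanced arcs: arcs of `P` together with loops `(i,i)` at isolated points. -/
def EnhIsArc {n : ℕ} (P : Finpartition (Finset.univ : Finset (Fin n))) (i j : Fin n) : Prop :=
  IsArc P i j ∨ (i = j ∧ i ∈ blockMin P ∧ i ∈ blockMax P)

/-- An `r`-colored enhanced partition of `[n]`. -/
structure EnhColoredPartition (n r : ℕ) where
  P : Finpartition (Finset.univ : Finset (Fin n))
  color : ∀ i j : Fin n, EnhIsArc P i j → Fin r

/-- Enhanced `k`-crossing: same-colored enhanced arcs with
`i₁ < ⋯ < i_k ≤ j₁ < ⋯ < j_k`. -/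
def HasEnhCrossing {n r : ℕ} (Λ : EnhColoredPartition n r) (k : ℕ) : Prop :=
  ∃ (f g : Fin k → Fin n) (c : Fin r),
    StrictMono f ∧ StrictMono g ∧ (∀ s t : Fin k, f s ≤ g t) ∧
    ∀ t, ∃ h : EnhIsArc Λ.P (f t) (g t), Λ.color (f t) (g t) h = c

/-- Enhanced `k`-nesting: same-colored enhanced arcs with
`i₁ < ⋯ < i_k ≤ j_k < ⋯ < j₁`. -/
def HasEnhNesting {n r : ℕ} (Λ : EnhColoredPartition n r) (k : ℕ) : Prop :=
  ∃ (f g : Fin k → Fin n) (c : Fin r),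
    StrictMono f ∧ StrictAnti g ∧ (∀ s t : Fin k, f s ≤ g t) ∧
    ∀ t, ∃ h : EnhIsArc Λ.P (f t) (g t), Λ.color (f t) (g t) h = c

noncomputable def enhCrNum {n r : ℕ} (Λ : EnhColoredPartition n r) : ℕ :=
  sSup {k | 0 < k ∧ HasEnhCrossing Λ k}

noncomputable def enhNeNum {n r : ℕ} (Λ : EnhColoredPartition n r) : ℕ :=
  sSup {k | 0 < k ∧ HasEnhNesting Λ k}

/-- The `(r+1)²` steps: `±e_i` (first summand with a sign), `e_i − e_j` for `i ≠ j`,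
and `r+1` distinct zero steps. -/
def Step (r : ℕ) : Type :=
  (Fin r × Bool) ⊕ ({p : Fin r × Fin r // p.1 ≠ p.2} ⊕ Fin (r + 1))

/-- The displacement vector of a step. -/
def stepVec {r : ℕ} : Step r → Fin r → ℤ
  | Sum.inl (i, b) => fun t => if t = i then (if b then 1 else -1) else 0
  | Sum.inr (Sum.inl p) => fun t => (if t = p.1.1 then 1 else 0) - (if t = p.1.2 then 1 else 0)
  | Sum.inr (Sum.inr _) => fun _ => 0

/-- Position after the first `k` steps of a walk started at the origin. -/
def walkPos {r m : ℕ} (w : Fin m → Step r) (k : ℕ) (t : Fin r) : ℤ :=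
  ∑ i ∈ Finset.univ.filter (fun i : Fin m => i.1 < k), stepVec (w i) t

/-- The walk stays in `ℕ^r` throughout and returns to the origin. -/
def IsClosedWalk {r m : ℕ} (w : Fin m → Step r) : Prop :=
  (∀ k : ℕ, ∀ t : Fin r, 0 ≤ walkPos w k t) ∧ ∀ t : Fin r, walkPos w m t = 0

/-- An `r`-colored permutation of `[n]`. -/
structure ColoredPerm (n r : ℕ) where
  sigma : Equiv.Perm (Fin n)
  cplus : ∀ i : Fin n, i ≤ sigma i → Fin r
  cminus : ∀ i : Fin n, sigma i < i → Fin r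

/-- `k`-crossing of a colored permutation: an enhanced `k`-crossing among same-colored
upper arcs `(i, σ i)`, or an ordinary `k`-crossing among same-colored lower arcs `(σ i, i)`. -/
def PermHasCrossing {n r : ℕ} (S : ColoredPerm n r) (k : ℕ) : Prop :=
  (∃ (f : Fin k → Fin n) (c : Fin r),
      StrictMono f ∧ StrictMono (fun t => S.sigma (f t)) ∧
      (∀ s t : Fin k, f s ≤ S.sigma (f t)) ∧
      ∀ t, ∃ h : f t ≤ S.sigma (f t), S.cplus (f t) h = c) ∨
  (∃ (f : Fin k → Fin n) (c : Fin r),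
      StrictMono (fun t => S.sigma (f t)) ∧ StrictMono f ∧
      (∀ s t : Fin k, S.sigma (f s) < f t) ∧
      ∀ t, ∃ h : S.sigma (f t) < f t, S.cminus (f t) h = c)

/-- `k`-nesting of a colored permutation. -/
def PermHasNesting {n r : ℕ} (S : ColoredPerm n r) (k : ℕ) : Prop :=
  (∃ (f : Fin k → Fin n) (c : Fin r),
      StrictMono f ∧ StrictAnti (fun t => S.sigma (f t)) ∧
      (∀ s t : Fin k, f s ≤ S.sigma (f t)) ∧
      ∀ t, ∃ h : f t ≤ S.sigma (f t), S.cplus (f t) h = c) ∨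
  (∃ (f : Fin k → Fin n) (c : Fin r),
      StrictMono (fun t => S.sigma (f t)) ∧ StrictAnti f ∧
      (∀ s t : Fin k, S.sigma (f s) < f t) ∧
      ∀ t, ∃ h : S.sigma (f t) < f t, S.cminus (f t) h = c)

/-!
A partition of `Fin n` is determined by its arc relation, and the relations that arise are exactly
the increasing, functional and injective ones: the blocks are recovered as the maximal chains.
An `r`-colouring splits the arc relation into `r` relations of the same kind. Conversely, `r` such
relations merge into one exactly when no two of them share a source or a target, and this is the
condition `min(Pᵢ) ∪ min(Pⱼ) = max(Pᵢ) ∪ max(Pⱼ) = [n]`, because `i` is not the minimum of its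
block iff it is the target of an arc, and not the maximum iff it is the source of one.
-/

open Relation

section Arcs

variable {n : ℕ} {P P' : Finpartition (Finset.univ : Finset (Fin n))} {i j : Fin n}

lemma mem_part_iff_part_eq : j ∈ P.part i ↔ P.part j = P.part i :=
  P.mem_part_iff_part_eq_part (mem_univ _) (mem_univ _)

lemma mem_part_comm : j ∈ P.part i ↔ i ∈ P.part j := by
  rw [mem_part_iff_part_eq, mem_part_iff_part_eq, eq_comm]

lemma isArc_iff_part :
    IsArc P i j ↔ i < j ∧ j ∈ P.part i ∧ ∀ k ∈ P.part i, i < k → j ≤ k := by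
  refine ⟨fun ⟨hij, B, hB, hi, hj, hmin⟩ => ?_, fun ⟨hij, hj, hmin⟩ => ?_⟩
  · rw [P.part_eq_of_mem hB hi]
    exact ⟨hij, hj, hmin⟩
  · exact ⟨hij, P.part i, P.part_mem.2 (mem_univ i), P.mem_part (mem_univ i), hj, hmin⟩

lemma mem_blockMin_iff_part : i ∈ blockMin P ↔ ∀ k ∈ P.part i, i ≤ k := by
  refine ⟨fun ⟨B, hB, hi, hmin⟩ => ?_, fun hmin => ?_⟩
  · rwa [P.part_eq_of_mem hB hi]
  · exact ⟨P.part i, P.part_mem.2 (mem_univ i), P.mem_part (mem_univ i), hmin⟩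

lemma mem_blockMax_iff_part : i ∈ blockMax P ↔ ∀ k ∈ P.part i, k ≤ i := by
  refine ⟨fun ⟨B, hB, hi, hmax⟩ => ?_, fun hmax => ?_⟩
  · rwa [P.part_eq_of_mem hB hi]
  · exact ⟨P.part i, P.part_mem.2 (mem_univ i), P.mem_part (mem_univ i), hmax⟩

namespace IsArc

lemma lt (h : IsArc P i j) : i < j := h.1

lemma mem_part (h : IsArc P i j) : j ∈ P.part i := (isArc_iff_part.1 h).2.1

lemma right_unique : Relator.RightUnique (IsArc P) := fun i j j' h h' => by
  rw [isArc_iff_part] at h h'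
  exact le_antisymm (h.2.2 j' h'.2.1 h'.1) (h'.2.2 j h.2.1 h.1)

lemma left_unique : Relator.LeftUnique (IsArc P) := fun i i' j h h' => by
  have ordered : ∀ {a b : Fin n}, IsArc P a j → IsArc P b j → ¬ a < b := fun {a b} ha hb hab => by
    have hb_mem : b ∈ P.part a := mem_part_iff_part_eq.2 <|
      (mem_part_iff_part_eq.1 hb.mem_part).symm.trans (mem_part_iff_part_eq.1 ha.mem_part)
    exact ((isArc_iff_part.1 ha).2.2 b hb_mem hab).not_gt hb.lt
  exact le_antisymm (not_lt.1 (ordered h' h)) (not_lt.1 (ordered h h'))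

end IsArc

lemma exists_isArc_to (hj : j ∈ P.part i) (hij : i < j) : ∃ k ∈ P.part i, i ≤ k ∧ IsArc P k j := by
  set T := (P.part i).filter (· < j)
  have hT : T.Nonempty := ⟨i, mem_filter.2 ⟨P.mem_part (mem_univ i), hij⟩⟩
  obtain ⟨hkB, hkj⟩ := mem_filter.1 (T.max'_mem hT)
  refine ⟨T.max' hT, hkB, T.le_max' i (mem_filter.2 ⟨P.mem_part (mem_univ i), hij⟩), ?_⟩
  rw [isArc_iff_part, mem_part_iff_part_eq.1 hkB]
  refine ⟨hkj, hj, fun x hx hkx => not_lt.1 fun hxj => ?_⟩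
  exact (T.le_max' x (mem_filter.2 ⟨hx, hxj⟩)).not_gt hkx

lemma exists_isArc_from (hj : j ∈ P.part i) (hij : i < j) : ∃ k, IsArc P i k := by
  set T := (P.part i).filter (i < ·)
  have hT : T.Nonempty := ⟨j, mem_filter.2 ⟨hj, hij⟩⟩
  obtain ⟨hkB, hik⟩ := mem_filter.1 (T.min'_mem hT)
  refine ⟨T.min' hT, isArc_iff_part.2 ⟨hik, hkB, fun x hx hix => ?_⟩⟩
  exact T.min'_le x (mem_filter.2 ⟨hx, hix⟩)

lemma mem_blockMin_iff : i ∈ blockMin P ↔ ∀ k, ¬ IsArc P k i := by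
  rw [mem_blockMin_iff_part]
  refine ⟨fun hmin k hk => (hmin k (mem_part_comm.1 hk.mem_part)).not_gt hk.lt,
    fun hno k hk => not_lt.1 fun hki => ?_⟩
  obtain ⟨l, -, -, hl⟩ := exists_isArc_to (mem_part_comm.1 hk) hki
  exact hno l hl

lemma mem_blockMax_iff : i ∈ blockMax P ↔ ∀ k, ¬ IsArc P i k := by
  rw [mem_blockMax_iff_part]
  refine ⟨fun hmax k hk => (hmax k hk.mem_part).not_gt hk.lt,
    fun hno k hk => not_lt.1 fun hik => ?_⟩
  obtain ⟨l, hl⟩ := exists_isArc_from hk hik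
  exact hno l hl

lemma part_eq_of_reflTransGen (h : ReflTransGen (IsArc P) i j) : P.part j = P.part i := by
  induction h with
  | refl => rfl
  | tail _ hkj ih => exact (mem_part_iff_part_eq.1 hkj.mem_part).trans ih

lemma reflTransGen_of_mem_part (hj : j ∈ P.part i) (hij : i ≤ j) : ReflTransGen (IsArc P) i j := by
  induction j using WellFoundedLT.induction with
  | _ j ih =>
    rcases hij.eq_or_lt with rfl | hij
    · exact .refl
    · obtain ⟨k, hk, hik, hkj⟩ := exists_isArc_to hj hij
      exact (ih k hkj.lt hk hik).tail hkj

lemma mem_part_iff_reflTransGen :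
    j ∈ P.part i ↔ ReflTransGen (IsArc P) i j ∨ ReflTransGen (IsArc P) j i := by
  refine ⟨fun hj => ?_, ?_⟩
  · rcases le_total i j with hij | hji
    · exact .inl (reflTransGen_of_mem_part hj hij)
    · exact .inr (reflTransGen_of_mem_part (mem_part_comm.1 hj) hji)
  · rintro (h | h)
    · exact mem_part_iff_part_eq.2 (part_eq_of_reflTransGen h)
    · exact mem_part_iff_part_eq.2 (part_eq_of_reflTransGen h).symm

lemma mem_parts_iff_exists_part_eq {B : Finset (Fin n)} : B ∈ P.parts ↔ ∃ i, P.part i = B :=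
  ⟨fun hB => (P.part_surjOn hB).imp fun _ h => h.2, fun ⟨i, h⟩ => h ▸ P.part_mem.2 (mem_univ i)⟩

lemma eq_of_part_eq (h : ∀ i, P.part i = P'.part i) : P = P' :=
  Finpartition.ext <| Finset.ext fun B => by simp only [mem_parts_iff_exists_part_eq, h]

lemma eq_of_isArc_iff (h : ∀ i j, IsArc P i j ↔ IsArc P' i j) : P = P' := by
  have harcs : IsArc P = IsArc P' := funext₂ fun i j => propext (h i j)
  exact eq_of_part_eq fun i => Finset.ext fun j => by
    rw [mem_part_iff_reflTransGen, mem_part_iff_reflTransGen, harcs]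

end Arcs

section Chains

variable {α : Type*} {A : α → α → Prop}

def chainSetoid (hr : Relator.RightUnique A) (hl : Relator.LeftUnique A) : Setoid α where
  r a b := ReflTransGen A a b ∨ ReflTransGen A b a
  iseqv.refl _ := .inl .refl
  iseqv.symm := Or.symm
  iseqv.trans := by
    rintro a b c (hab | hba) (hbc | hcb)
    · exact .inl (hab.trans hbc)
    · have hl' : Relator.RightUnique (Function.swap A) := fun _ _ _ h h' => hl h h'
      rw [← reflTransGen_swap] at hab hcb
      simpa only [reflTransGen_swap, or_comm] using ReflTransGen.total_of_right_unique hl' hab hcb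
    · exact ReflTransGen.total_of_right_unique hr hba hbc
    · exact .inr (hcb.trans hba)

end Chains

section ArcSystems

variable {n : ℕ} {A : Fin n → Fin n → Prop} {i j : Fin n}

/-- The relations that arise as arc relations of partitions of `Fin n`. -/
structure IsArcSystem (A : Fin n → Fin n → Prop) : Prop where
  lt : ∀ ⦃i j⦄, A i j → i < j
  right_unique : Relator.RightUnique A
  left_unique : Relator.LeftUnique A

namespace IsArcSystem

variable (hA : IsArcSystem A)
include hA

lemma le_of_reflTransGen (h : ReflTransGen A i j) : i ≤ j := by
  induction h with
  | refl => exact le_rfl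
  | tail _ hkj ih => exact ih.trans (hA.lt hkj).le

open Classical in
noncomputable def partition : Finpartition (Finset.univ : Finset (Fin n)) :=
  Finpartition.ofSetoid (chainSetoid hA.right_unique hA.left_unique)

lemma mem_part_partition :
    j ∈ hA.partition.part i ↔ ReflTransGen A i j ∨ ReflTransGen A j i := by
  classical
  exact Finpartition.mem_part_ofSetoid_iff_rel

lemma isArc_partition : IsArc hA.partition i j ↔ A i j := by
  have chain_of_lt : ∀ {k}, k ∈ hA.partition.part i → i < k → ∃ x, A i x ∧ ReflTransGen A x k :=
    fun hk hik => by
      have hik' := (hA.mem_part_partition.1 hk).resolve_right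
        fun h => (hA.le_of_reflTransGen h).not_gt hik
      exact (ReflTransGen.cases_head hik').resolve_left hik.ne
  rw [isArc_iff_part]
  constructor
  · rintro ⟨hij, hj, hmin⟩
    obtain ⟨x, hix, hxj⟩ := chain_of_lt hj hij
    have hx : x ∈ hA.partition.part i := hA.mem_part_partition.2 (.inl (.single hix))
    rwa [le_antisymm (hA.le_of_reflTransGen hxj) (hmin x hx (hA.lt hix))] at hix
  · intro hij
    refine ⟨hA.lt hij, hA.mem_part_partition.2 (.inl (.single hij)), fun k hk hik => ?_⟩
    obtain ⟨x, hix, hxk⟩ := chain_of_lt hk hik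
    rw [hA.right_unique hij hix]
    exact hA.le_of_reflTransGen hxk

end IsArcSystem

end ArcSystems

section Colored

variable {n r : ℕ} {i j : Fin n}

def PairwiseMinMaxCover (Q : Fin r → Finpartition (Finset.univ : Finset (Fin n))) : Prop :=
  ∀ i j : Fin r, i ≠ j →
    blockMin (Q i) ∪ blockMin (Q j) = Set.univ ∧ blockMax (Q i) ∪ blockMax (Q j) = Set.univ

lemma pairwiseMinMaxCover_iff {Q : Fin r → Finpartition (Finset.univ : Finset (Fin n))} :
    PairwiseMinMaxCover Q ↔
      (∀ t t' i j j', IsArc (Q t) i j → IsArc (Q t') i j' → t = t') ∧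
      (∀ t t' i i' j, IsArc (Q t) i j → IsArc (Q t') i' j → t = t') := by
  simp only [PairwiseMinMaxCover, Set.eq_univ_iff_forall, Set.mem_union, mem_blockMin_iff,
    mem_blockMax_iff]
  grind

namespace ColoredPartition

lemma ext {Λ Λ' : ColoredPartition n r} (hP : Λ.P = Λ'.P)
    (hcolor : ∀ i j (h : IsArc Λ.P i j) (h' : IsArc Λ'.P i j), Λ.color i j h = Λ'.color i j h') :
    Λ = Λ' := by
  obtain ⟨P, color⟩ := Λ
  obtain ⟨P', color'⟩ := Λ'
  subst hP
  congr
  funext i j h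
  exact hcolor i j h h

variable (Λ : ColoredPartition n r) (t : Fin r)

def arcsOfColor (i j : Fin n) : Prop :=
  ∃ h : IsArc Λ.P i j, Λ.color i j h = t

lemma isArcSystem_arcsOfColor : IsArcSystem (Λ.arcsOfColor t) where
  lt _ _ := fun ⟨h, _⟩ => h.lt
  right_unique _ _ _ := fun ⟨h, _⟩ ⟨h', _⟩ => IsArc.right_unique h h'
  left_unique _ _ _ := fun ⟨h, _⟩ ⟨h', _⟩ => IsArc.left_unique h h'

noncomputable def split : Finpartition (Finset.univ : Finset (Fin n)) :=
  (Λ.isArcSystem_arcsOfColor t).partition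

variable {Λ t}

lemma isArc_split : IsArc (Λ.split t) i j ↔ Λ.arcsOfColor t i j :=
  IsArcSystem.isArc_partition _

variable (Λ)

lemma pairwiseMinMaxCover_split : PairwiseMinMaxCover Λ.split := by
  simp only [pairwiseMinMaxCover_iff, isArc_split]
  constructor
  · rintro t t' i j j' ⟨h, rfl⟩ ⟨h', rfl⟩
    obtain rfl := IsArc.right_unique h h'
    rfl
  · rintro t t' i i' j ⟨h, rfl⟩ ⟨h', rfl⟩
    obtain rfl := IsArc.left_unique h h'
    rfl

end ColoredPartition

def unionArcs (Q : Fin r → Finpartition (Finset.univ : Finset (Fin n))) (i j : Fin n) : Prop :=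
  ∃ t, IsArc (Q t) i j

namespace PairwiseMinMaxCover

variable {Q : Fin r → Finpartition (Finset.univ : Finset (Fin n))} (hQ : PairwiseMinMaxCover Q)
include hQ

lemma isArcSystem_unionArcs : IsArcSystem (unionArcs Q) where
  lt _ _ := fun ⟨_, h⟩ => h.lt
  right_unique _ _ _ := fun ⟨t, h⟩ ⟨t', h'⟩ => by
    obtain rfl := (pairwiseMinMaxCover_iff.1 hQ).1 t t' _ _ _ h h'
    exact IsArc.right_unique h h'
  left_unique _ _ _ := fun ⟨t, h⟩ ⟨t', h'⟩ => by
    obtain rfl := (pairwiseMinMaxCover_iff.1 hQ).2 t t' _ _ _ h h'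
    exact IsArc.left_unique h h'

noncomputable def merge : ColoredPartition n r where
  P := hQ.isArcSystem_unionArcs.partition
  color i j h := (hQ.isArcSystem_unionArcs.isArc_partition.1 h).choose

lemma isArc_merge : IsArc hQ.merge.P i j ↔ ∃ t, IsArc (Q t) i j :=
  hQ.isArcSystem_unionArcs.isArc_partition

lemma merge_color_eq {t : Fin r} (h : IsArc hQ.merge.P i j) (ht : IsArc (Q t) i j) :
    hQ.merge.color i j h = t :=
  (pairwiseMinMaxCover_iff.1 hQ).1 _ _ _ _ _ (hQ.isArc_merge.1 h).choose_spec ht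

end PairwiseMinMaxCover

noncomputable def ColoredPartition.splitEquiv :
    ColoredPartition n r ≃ {Q : Fin r → Finpartition (Finset.univ : Finset (Fin n)) //
      PairwiseMinMaxCover Q} where
  toFun Λ := ⟨Λ.split, Λ.pairwiseMinMaxCover_split⟩
  invFun Q := Q.2.merge
  left_inv Λ := by
    refine ColoredPartition.ext (eq_of_isArc_iff fun i j => ?_) fun i j h h' => ?_
    · simp only [PairwiseMinMaxCover.isArc_merge, ColoredPartition.isArc_split,
        ColoredPartition.arcsOfColor]
      exact ⟨fun ⟨_, h, _⟩ => h, fun h => ⟨_, h, rfl⟩⟩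
    · exact PairwiseMinMaxCover.merge_color_eq _ h (ColoredPartition.isArc_split.2 ⟨h', rfl⟩)
  right_inv Q := by
    refine Subtype.ext <| funext fun t => eq_of_isArc_iff fun i j => ?_
    rw [ColoredPartition.isArc_split]
    refine ⟨fun ⟨h, ht⟩ => ?_, fun hq => ⟨Q.2.isArc_merge.2 ⟨t, hq⟩, Q.2.merge_color_eq _ hq⟩⟩
    obtain ⟨t', ht'⟩ := Q.2.isArc_merge.1 h
    rwa [← ht, Q.2.merge_color_eq h ht']

end Colored

/-- The color-splitting map is a bijection from `r`-colored partitions of `[n]`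
onto `r`-tuples of partitions with `min(Pᵢ) ∪ min(Pⱼ) = max(Pᵢ) ∪ max(Pⱼ) = [n]`
for all distinct `i, j`; the `t`-th component of the image has as arcs exactly
the `t`-colored arcs of `Λ`. -/
theorem stmt0 (n r : ℕ) :
    ∃ e : ColoredPartition n r ≃
        {Q : Fin r → Finpartition (Finset.univ : Finset (Fin n)) //
          ∀ i j : Fin r, i ≠ j →
            blockMin (Q i) ∪ blockMin (Q j) = Set.univ ∧
            blockMax (Q i) ∪ blockMax (Q j) = Set.univ},
      ∀ (Λ : ColoredPartition n r) (t : Fin r) (a b : Fin n),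
        IsArc ((e Λ).1 t) a b ↔ ∃ h : IsArc Λ.P a b, Λ.color a b h = t :=
  ⟨ColoredPartition.splitEquiv, fun _ _ _ _ => ColoredPartition.isArc_split⟩
end

section
/- For positive integers n and r, the number of r-colored noncrossing partitions of [n] equals the number of (n−1)-step closed walks in ℕ^r starting and ending at the origin using the following (r+1)^2 steps: ±e_i for each i ∈ [r], the steps e_i − e_j for distinct i, j ∈ [r], and r+1 distinct zero steps (i.e., staying in place, counted with multiplicity r+1). -/
open Finset

/-!
Step `k` of the walk records the arcs of the partition near `k`: the color `c` of a short arc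
`(k, k + 1)` as the `c`-th zero step, and otherwise the color `i` of a long arc starting at `k` and
the color `j` of a long arc ending at `k + 1`, as `e_i - e_j`, `e_i`, `-e_j` or the last zero step
(`i = j` would be a crossing). The `c`-th coordinate after `k` steps then counts the `c`-arcs
passing over `k`, so the walk is closed and stays in `ℕ^r`. As arcs of one color are nested or
disjoint, every long `c`-arc is an excursion of the `c`-th coordinate: its up-step is matched with
the first return to the same level. Conversely, the excursions of a closed walk together with the
short arcs of its zero steps form a set of arcs in which every point starts and ends at most one
arc and no two arcs of one color cross; it is the arc set of a unique colored partition.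
-/

namespace Relation

variable {α : Type*} {R : α → α → Prop}

theorem ReflTransGen.to_eqvGen {a b : α} (h : ReflTransGen R a b) : EqvGen R a b := by
  induction h with
  | refl => exact .refl a
  | tail _ hbc ih => exact ih.trans _ _ _ (.rel _ _ hbc)

theorem ReflTransGen.le_of_rel_lt [Preorder α] (hR : ∀ ⦃a b⦄, R a b → a < b) {a b : α}
    (h : ReflTransGen R a b) : a ≤ b := by
  induction h with
  | refl => exact le_rfl
  | tail _ hbc ih => exact ih.trans (hR hbc).le

theorem EqvGen.reflTransGen_or_reflTransGen (hl : Relator.LeftUnique R)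
    (hr : Relator.RightUnique R) {a b : α} (h : EqvGen R a b) :
    ReflTransGen R a b ∨ ReflTransGen R b a := by
  induction h with
  | rel a b hab => exact .inl (.single hab)
  | refl a => exact .inl .refl
  | symm a b _ ih => exact ih.symm
  | trans a b c _ _ ihab ihbc =>
    rcases ihab with hab | hba <;> rcases ihbc with hbc | hcb
    · exact .inl (hab.trans hbc)
    · have hsw := ReflTransGen.total_of_right_unique (r := Function.swap R)
        (fun _ _ _ h h' => hl h h') (reflTransGen_swap.2 hab) (reflTransGen_swap.2 hcb)
      exact (hsw.imp reflTransGen_swap.1 reflTransGen_swap.1).symm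
    · exact ReflTransGen.total_of_right_unique hr hba hbc
    · exact .inr (hcb.trans hba)

end Relation

open Relation

section Arcs

variable {n : ℕ}

theorem IsArc.right_unique_s5 {P : Finpartition (univ : Finset (Fin n))} {i j j' : Fin n}
    (h : IsArc P i j) (h' : IsArc P i j') : j = j' := by
  obtain ⟨hij, B, hB, hiB, hjB, hmin⟩ := h
  obtain ⟨hij', B', hB', hiB', hjB', hmin'⟩ := h'
  obtain rfl := P.eq_of_mem_parts hB hB' hiB hiB'
  exact le_antisymm (hmin j' hjB' hij') (hmin' j hjB hij)

theorem IsArc.left_unique_s5 {P : Finpartition (univ : Finset (Fin n))} {i i' j : Fin n}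
    (h : IsArc P i j) (h' : IsArc P i' j) : i = i' := by
  obtain ⟨hij, B, hB, hiB, hjB, hmin⟩ := h
  obtain ⟨hij', B', hB', hiB', hjB', hmin'⟩ := h'
  obtain rfl := P.eq_of_mem_parts hB hB' hjB hjB'
  by_contra hne
  rcases lt_or_gt_of_ne hne with hlt | hlt
  · exact (hmin i' hiB' hlt).not_gt hij'
  · exact (hmin' i hiB hlt).not_gt hij

theorem Finpartition.eqvGen_isArc_of_mem_part (P : Finpartition (univ : Finset (Fin n))) {a b : Fin n}
    (hab : a ≤ b) (h : b ∈ P.part a) : EqvGen (IsArc P) a b := by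
  induction hd : b.1 - a.1 using Nat.strong_induction_on generalizing a with
  | _ d ih =>
    rcases hab.eq_or_lt with rfl | hlt
    · exact .refl a
    have hne : {k ∈ P.part a | a < k}.Nonempty := ⟨b, mem_filter.2 ⟨h, hlt⟩⟩
    obtain ⟨hsa, hasucc⟩ := mem_filter.1 (min'_mem _ hne)
    set s := min' _ hne
    have harc : IsArc P a s := ⟨hasucc, P.part a, P.part_mem.2 (mem_univ a),
      P.mem_part (mem_univ a), hsa, fun k hk hak => min'_le _ _ (mem_filter.2 ⟨hk, hak⟩)⟩
    have hbs : b ∈ P.part s := by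
      rwa [(P.mem_part_iff_part_eq_part (mem_univ s) (mem_univ a)).1 hsa]
    have hsb : s ≤ b := min'_le _ _ (mem_filter.2 ⟨h, hlt⟩)
    exact .trans _ _ _ (.rel _ _ harc)
      (ih (b.1 - s.1) (by rw [← hd]; exact Nat.sub_lt_sub_left hlt hasucc) hsb hbs rfl)

theorem Finpartition.mem_part_iff_eqvGen_isArc (P : Finpartition (univ : Finset (Fin n))) {a b : Fin n} :
    b ∈ P.part a ↔ EqvGen (IsArc P) a b := by
  have hsymm : ∀ {a b}, b ∈ P.part a → a ∈ P.part b := fun {a b} h => by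
    rw [(P.mem_part_iff_part_eq_part (mem_univ b) (mem_univ a)).1 h]
    exact P.mem_part (mem_univ a)
  constructor
  · intro h
    rcases le_total a b with hab | hba
    · exact P.eqvGen_isArc_of_mem_part hab h
    · exact (P.eqvGen_isArc_of_mem_part hba (hsymm h)).symm
  · intro h
    induction h with
    | rel x y hxy =>
      obtain ⟨_, B, hB, hx, hy, _⟩ := hxy
      rwa [P.part_eq_of_mem hB hx]
    | refl x => exact P.mem_part (mem_univ x)
    | symm x y _ ih => exact hsymm ih
    | trans x y z _ _ ihxy ihyz =>
      rwa [← (P.mem_part_iff_part_eq_part (mem_univ y) (mem_univ x)).1 ihxy]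

theorem Finpartition.eq_of_isArc_eq {P Q : Finpartition (univ : Finset (Fin n))}
    (h : IsArc P = IsArc Q) : P = Q := by
  have hpart : ∀ a, P.part a = Q.part a := fun a => by
    ext b
    rw [P.mem_part_iff_eqvGen_isArc, Q.mem_part_iff_eqvGen_isArc, h]
  ext B
  constructor
  · intro hB
    obtain ⟨a, ha⟩ := P.nonempty_of_mem_parts hB
    rw [← P.part_eq_of_mem hB ha, hpart]
    exact Q.part_mem.2 (mem_univ a)
  · intro hB
    obtain ⟨a, ha⟩ := Q.nonempty_of_mem_parts hB
    rw [← Q.part_eq_of_mem hB ha, ← hpart]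
    exact P.part_mem.2 (mem_univ a)

theorem Finpartition.isArc_ofSetoid_eqvGen_iff {R : Fin n → Fin n → Prop}
    [DecidableRel (EqvGen.setoid R).r] (hlt : ∀ ⦃a b⦄, R a b → a < b)
    (hl : Relator.LeftUnique R) (hr : Relator.RightUnique R) {x y : Fin n} :
    IsArc (Finpartition.ofSetoid (EqvGen.setoid R)) x y ↔ R x y := by
  set P := Finpartition.ofSetoid (EqvGen.setoid R)
  have hmem : ∀ {a b}, a ≤ b → (b ∈ P.part a ↔ ReflTransGen R a b) := fun {a b} hab => by
    refine Finpartition.mem_part_ofSetoid_iff_rel.trans ⟨fun h => ?_, fun h => h.to_eqvGen⟩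
    rcases h.reflTransGen_or_reflTransGen hl hr with hab' | hba
    · exact hab'
    · obtain rfl := le_antisymm hab (hba.le_of_rel_lt hlt)
      exact .refl
  have hnext : ∀ {k}, x < k → ReflTransGen R x k → ∃ z, R x z ∧ z ≤ k := fun hxk h => by
    rcases h.cases_head with rfl | ⟨z, hxz, hzk⟩
    · exact absurd hxk (lt_irrefl x)
    · exact ⟨z, hxz, hzk.le_of_rel_lt hlt⟩
  have hpx : P.part x ∈ P.parts := P.part_mem.2 (mem_univ x)
  have hxx : x ∈ P.part x := P.mem_part (mem_univ x)
  constructor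
  · rintro ⟨hxy, B, hB, hxB, hyB, hmin⟩
    obtain rfl := P.part_eq_of_mem hB hxB
    obtain ⟨z, hxz, hzy⟩ := hnext hxy ((hmem hxy.le).1 hyB)
    have hzB : z ∈ P.part x := (hmem (hlt hxz).le).2 (.single hxz)
    rwa [le_antisymm hzy (hmin z hzB (hlt hxz))] at hxz
  · intro h
    refine ⟨hlt h, P.part x, hpx, hxx, (hmem (hlt h).le).2 (.single h), fun k hk hxk => ?_⟩
    obtain ⟨z, hxz, hzk⟩ := hnext hxk ((hmem hxk.le).1 hk)
    rwa [hr h hxz]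

end Arcs

section OptionChoose

variable {α : Type*}

open Classical in
noncomputable def optionChoose (P : α → Prop) : Option α :=
  if h : ∃ a, P a then some h.choose else none

theorem optionChoose_eq_some {P : α → Prop} (hP : ∀ a b, P a → P b → a = b) {a : α} :
    optionChoose P = some a ↔ P a := by
  unfold optionChoose
  split_ifs with h
  · exact Option.some_inj.trans ⟨fun he => he ▸ h.choose_spec, hP _ _ h.choose_spec⟩
  · exact iff_of_false (by simp) fun ha => h ⟨a, ha⟩

end OptionChoose

theorem card_eq_ite_of_subsingleton {α : Type*} {s : Finset α} {p : Prop} [Decidable p]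
    (hs : ∀ a ∈ s, ∀ b ∈ s, a = b) (hp : s.Nonempty ↔ p) : #s = if p then 1 else 0 := by
  split_ifs with h
  · exact le_antisymm (card_le_one.2 hs) (card_pos.2 (hp.2 h))
  · exact card_eq_zero.2 (not_nonempty_iff_eq_empty.1 (hp.not.2 h))

namespace Step

variable {r : ℕ}

def short : Step r → Option (Fin r)
  | Sum.inr (Sum.inr z) => if h : z.1 < r then some ⟨z.1, h⟩ else none
  | _ => none

def opens : Step r → Option (Fin r)
  | Sum.inl (i, true) => some i
  | Sum.inr (Sum.inl p) => some p.1.1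
  | _ => none

def closes : Step r → Option (Fin r)
  | Sum.inl (i, false) => some i
  | Sum.inr (Sum.inl p) => some p.1.2
  | _ => none

/-- The zero step `z` with `z < r` stands for a short arc of color `z`; `Fin.last r` is the
genuine zero step. -/
def ofColors : Option (Fin r) → Option (Fin r) → Option (Fin r) → Step r
  | some c, _, _ => Sum.inr (Sum.inr c.castSucc)
  | none, some i, some j =>
    if h : i = j then Sum.inl (i, true) else Sum.inr (Sum.inl ⟨(i, j), h⟩)
  | none, some i, none => Sum.inl (i, true)
  | none, none, some j => Sum.inl (j, false)
  | none, none, none => Sum.inr (Sum.inr (Fin.last r))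

theorem stepVec_eq (s : Step r) (c : Fin r) :
    stepVec s c = (if s.opens = some c then 1 else 0) - (if s.closes = some c then 1 else 0) := by
  rcases s with ⟨i, _ | _⟩ | ⟨⟨⟨i, j⟩, hij⟩⟩ | z
  · simp [stepVec, opens, closes, eq_comm, apply_ite]
  · simp [stepVec, opens, closes, eq_comm]
  · simp only [stepVec, opens, closes, Option.some_inj, eq_comm]
  · simp [stepVec, opens, closes]

theorem opens_ne_closes {s : Step r} {c : Fin r} (h : s.opens = some c) : s.closes ≠ some c := by
  rcases s with ⟨i, _ | _⟩ | ⟨⟨⟨i, j⟩, hij⟩⟩ | z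
  · simp [opens] at h
  · simp [closes]
  · simp only [opens, closes, ne_eq, Option.some_inj] at h ⊢
    exact fun hj => hij (h.trans hj.symm)
  · simp [opens] at h

theorem opens_eq_none_of_short {s : Step r} {c : Fin r} (h : s.short = some c) :
    s.opens = none := by
  rcases s with ⟨i, _ | _⟩ | ⟨⟨⟨i, j⟩, hij⟩⟩ | z <;> simp_all [opens, short]

theorem closes_eq_none_of_short {s : Step r} {c : Fin r} (h : s.short = some c) :
    s.closes = none := by
  rcases s with ⟨i, _ | _⟩ | ⟨⟨⟨i, j⟩, hij⟩⟩ | z <;> simp_all [closes, short]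

theorem ofColors_short_opens_closes (s : Step r) : ofColors s.short s.opens s.closes = s := by
  rcases s with ⟨i, _ | _⟩ | ⟨⟨⟨i, j⟩, hij⟩⟩ | z
  · rfl
  · rfl
  · exact dif_neg hij
  · cases z using Fin.lastCases with
    | last =>
      simp only [short, opens, closes, ofColors, Fin.val_last, lt_self_iff_false, ↓reduceDIte]
      rfl
    | cast z =>
      simp only [short, opens, closes, ofColors, Fin.val_castSucc, Fin.is_lt, ↓reduceDIte,
        Fin.eta]
      rfl

variable (a o e : Option (Fin r))

theorem short_ofColors : (ofColors a o e).short = a := by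
  rcases a with _ | c
  · rcases o with _ | i <;> rcases e with _ | j
    · simp [ofColors, short]
    · simp [ofColors, short]
    · simp [ofColors, short]
    · by_cases h : i = j <;> simp [ofColors, short, h]
  · simp [ofColors, short]

theorem opens_ofColors (h : a ≠ none → o = none) : (ofColors a o e).opens = o := by
  rcases a with _ | c
  · rcases o with _ | i <;> rcases e with _ | j
    · simp [ofColors, opens]
    · simp [ofColors, opens]
    · simp [ofColors, opens]
    · by_cases h : i = j <;> simp [ofColors, opens, h]
  · simp [ofColors, opens, h (by simp)]

theorem closes_ofColors (h : a ≠ none → e = none) (hoe : ∀ c, o = some c → e ≠ some c) :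
    (ofColors a o e).closes = e := by
  rcases a with _ | c
  · rcases o with _ | i <;> rcases e with _ | j
    · simp [ofColors, closes]
    · simp [ofColors, closes]
    · simp [ofColors, closes]
    · have hij : i ≠ j := fun hij => hoe i rfl (by rw [hij])
      simp [ofColors, closes, hij]
  · simp [ofColors, closes, h (by simp)]

end Step

def IsExcursion (f : ℕ → ℤ) (p q : ℕ) : Prop :=
  p < q ∧ f q = f p ∧ ∀ k, p < k → k < q → f p < f k

namespace IsExcursion

variable {f : ℕ → ℤ} {p p' q q' : ℕ}

theorem right_unique_s5 (h : IsExcursion f p q) (h' : IsExcursion f p q') : q = q' := by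
  obtain ⟨hpq, hq, hmin⟩ := h
  obtain ⟨hpq', hq', hmin'⟩ := h'
  by_contra hne
  rcases Nat.lt_or_gt_of_ne hne with hlt | hlt
  · have := hmin' q hpq hlt; omega
  · have := hmin q' hpq' hlt; omega

theorem left_unique_s5 (h : IsExcursion f p q) (h' : IsExcursion f p' q) : p = p' := by
  obtain ⟨hpq, hq, hmin⟩ := h
  obtain ⟨hpq', hq', hmin'⟩ := h'
  by_contra hne
  rcases Nat.lt_or_gt_of_ne hne with hlt | hlt
  · have := hmin p' hlt hpq'; omega
  · have := hmin' p hlt hpq; omega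

end IsExcursion

/-- The excursion ends at the first return to the level `f p`. -/
theorem exists_isExcursion_of_lt_succ {f : ℕ → ℤ} {p q : ℕ}
    (hstep : ∀ k, f k - 1 ≤ f (k + 1))
    (hup : f p < f (p + 1)) (hpq : p < q) (hq : f q ≤ f p) : ∃ q', IsExcursion f p q' := by
  classical
  have hex : ∃ k, p < k ∧ f k ≤ f p := ⟨q, hpq, hq⟩
  obtain ⟨hpk, hfk⟩ := Nat.find_spec hex
  have hmin : ∀ k, p < k → k < Nat.find hex → f p < f k := fun k hpk hk =>
    lt_of_not_ge fun hkp => Nat.find_min hex hk ⟨hpk, hkp⟩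
  refine ⟨Nat.find hex, hpk, le_antisymm hfk ?_, hmin⟩
  obtain ⟨k, hk⟩ : ∃ k, Nat.find hex = k + 1 := Nat.exists_eq_succ_of_ne_zero (by omega)
  rw [hk] at hpk hfk ⊢
  rcases (Nat.lt_succ_iff.1 hpk).eq_or_lt with rfl | hpk'
  · omega
  · have := hmin k hpk' (by omega)
    have := hstep k
    omega

/-- The excursion starts at the last visit to the level `f (q + 1)` before `q + 1`. -/
theorem exists_isExcursion_of_succ_lt {f : ℕ → ℤ} {q : ℕ}
    (hstep : ∀ k, f (k + 1) ≤ f k + 1)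
    (hdown : f (q + 1) < f q) (h0 : f 0 ≤ f (q + 1)) : ∃ p, IsExcursion f p (q + 1) := by
  classical
  set p := Nat.findGreatest (fun k => f k ≤ f (q + 1)) q
  have hp : f p ≤ f (q + 1) :=
    Nat.findGreatest_spec (P := fun k => f k ≤ f (q + 1)) q.zero_le h0
  have hpq : p ≤ q := Nat.findGreatest_le q
  have hgt : ∀ k, p < k → k ≤ q → f (q + 1) < f k := fun k h1 h2 =>
    lt_of_not_ge (Nat.findGreatest_is_greatest h1 h2)
  have hpq' : p < q := lt_of_le_of_ne hpq fun h => by rw [h] at hp; omega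
  have := hgt (p + 1) (by omega) hpq'
  have := hstep p
  refine ⟨p, by omega, by omega, fun k h1 h2 => ?_⟩
  have := hgt k h1 (by omega)
  omega

section Walk

variable {r m : ℕ} (w : Fin m → Step r)

def shortAt (k : ℕ) : Option (Fin r) := if h : k < m then (w ⟨k, h⟩).short else none

def opensAt (k : ℕ) : Option (Fin r) := if h : k < m then (w ⟨k, h⟩).opens else none

def closesAt (k : ℕ) : Option (Fin r) := if h : k < m then (w ⟨k, h⟩).closes else none

def IsWalkArc (c : Fin r) (x y : ℕ) : Prop :=
  (y = x + 1 ∧ shortAt w x = some c) ∨ (x + 1 < y ∧ IsExcursion (walkPos w · c) x y)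

variable {w} {c c' : Fin r} {k x x' y y' : ℕ}

theorem lt_of_shortAt_eq_some (h : shortAt w k = some c) : k < m := by
  unfold shortAt at h; split_ifs at h with hk; exact hk

theorem lt_of_opensAt_eq_some (h : opensAt w k = some c) : k < m := by
  unfold opensAt at h; split_ifs at h with hk; exact hk

theorem lt_of_closesAt_eq_some (h : closesAt w k = some c) : k < m := by
  unfold closesAt at h; split_ifs at h with hk; exact hk

theorem opensAt_eq_none_of_shortAt (h : shortAt w k = some c) : opensAt w k = none := by
  unfold shortAt at h; unfold opensAt; split_ifs at h ⊢; exact Step.opens_eq_none_of_short h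

theorem closesAt_eq_none_of_shortAt (h : shortAt w k = some c) : closesAt w k = none := by
  unfold shortAt at h; unfold closesAt; split_ifs at h ⊢; exact Step.closes_eq_none_of_short h

theorem walkPos_zero (c : Fin r) : walkPos w 0 c = 0 := by
  simp [walkPos]

theorem walkPos_succ (k : ℕ) (c : Fin r) :
    walkPos w (k + 1) c = walkPos w k c +
      ((if opensAt w k = some c then 1 else 0) - (if closesAt w k = some c then 1 else 0)) := by
  unfold walkPos opensAt closesAt
  by_cases hk : k < m
  · have hfilter : univ.filter (fun i : Fin m => i.1 < k + 1) =
        insert ⟨k, hk⟩ (univ.filter fun i : Fin m => i.1 < k) := by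
      ext i
      simp only [mem_filter, mem_univ, true_and, mem_insert, Fin.ext_iff]
      omega
    rw [dif_pos hk, dif_pos hk, hfilter, sum_insert (by simp), Step.stepVec_eq, add_comm]
  · have hfilter : univ.filter (fun i : Fin m => i.1 < k + 1) =
        univ.filter fun i : Fin m => i.1 < k := by
      ext i
      simp only [mem_filter, mem_univ, true_and]
      omega
    rw [dif_neg hk, dif_neg hk, hfilter]
    simp

theorem closesAt_ne_of_opensAt (h : opensAt w k = some c) : closesAt w k ≠ some c := by
  unfold opensAt at h; unfold closesAt; split_ifs at h ⊢; exact Step.opens_ne_closes h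

theorem walkPos_succ_of_opensAt (h : opensAt w k = some c) :
    walkPos w (k + 1) c = walkPos w k c + 1 := by
  rw [walkPos_succ, if_pos h, if_neg (closesAt_ne_of_opensAt h)]; ring

theorem walkPos_succ_of_closesAt (h : closesAt w k = some c) :
    walkPos w (k + 1) c = walkPos w k c - 1 := by
  rw [walkPos_succ, if_pos h, if_neg fun ho => closesAt_ne_of_opensAt ho h]; ring

theorem opensAt_eq_some_of_walkPos_lt (h : walkPos w k c < walkPos w (k + 1) c) :
    opensAt w k = some c := by
  rw [walkPos_succ] at h; split_ifs at h with ho <;> first | exact ho | omega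

theorem closesAt_eq_some_of_walkPos_lt (h : walkPos w (k + 1) c < walkPos w k c) :
    closesAt w k = some c := by
  rw [walkPos_succ] at h; split_ifs at h with _ hc <;> first | exact hc | omega

theorem walkPos_sub_one_le (k : ℕ) (c : Fin r) : walkPos w k c - 1 ≤ walkPos w (k + 1) c := by
  rw [walkPos_succ]; split_ifs <;> omega

theorem walkPos_succ_le (k : ℕ) (c : Fin r) : walkPos w (k + 1) c ≤ walkPos w k c + 1 := by
  rw [walkPos_succ]; split_ifs <;> omega

theorem IsExcursion.opensAt_eq_some (h : IsExcursion (walkPos w · c) x y) (hxy : x + 1 < y) :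
    opensAt w x = some c :=
  opensAt_eq_some_of_walkPos_lt (h.2.2 (x + 1) (by omega) hxy)

theorem IsExcursion.closesAt_eq_some (h : IsExcursion (walkPos w · c) x (k + 1)) (hxk : x < k) :
    closesAt w k = some c :=
  closesAt_eq_some_of_walkPos_lt (h.2.1.trans_lt (h.2.2 k hxk k.lt_succ_self))

theorem IsWalkArc.lt (h : IsWalkArc w c x y) : x < y := by
  rcases h with ⟨rfl, _⟩ | ⟨hxy, _⟩ <;> omega

theorem IsWalkArc.le (h : IsWalkArc w c x y) : y ≤ m := by
  rcases h with ⟨rfl, hs⟩ | ⟨hxy, he⟩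
  · exact lt_of_shortAt_eq_some hs
  · obtain ⟨k, rfl⟩ : ∃ k, y = k + 1 := ⟨y - 1, by omega⟩
    exact lt_of_closesAt_eq_some (he.closesAt_eq_some (by omega))

theorem isWalkArc_succ_iff : IsWalkArc w c x (x + 1) ↔ shortAt w x = some c := by
  simp [IsWalkArc]

theorem IsWalkArc.right_unique_s5 (h : IsWalkArc w c x y) (h' : IsWalkArc w c' x y') :
    c = c' ∧ y = y' := by
  rcases h with ⟨rfl, hs⟩ | ⟨hxy, he⟩ <;> rcases h' with ⟨rfl, hs'⟩ | ⟨hxy', he'⟩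
  · exact ⟨Option.some_inj.1 (hs.symm.trans hs'), rfl⟩
  · exact absurd (he'.opensAt_eq_some hxy') (by simp [opensAt_eq_none_of_shortAt hs])
  · exact absurd (he.opensAt_eq_some hxy) (by simp [opensAt_eq_none_of_shortAt hs'])
  · obtain rfl :=
      Option.some_inj.1 ((he.opensAt_eq_some hxy).symm.trans (he'.opensAt_eq_some hxy'))
    exact ⟨rfl, he.right_unique_s5 he'⟩

theorem IsWalkArc.left_unique_s5 (h : IsWalkArc w c x y) (h' : IsWalkArc w c' x' y) :
    c = c' ∧ x = x' := by
  obtain ⟨k, rfl⟩ : ∃ k, y = k + 1 := ⟨y - 1, by have := h.lt; omega⟩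
  rcases h with ⟨hk, hs⟩ | ⟨hxy, he⟩ <;> rcases h' with ⟨hk', hs'⟩ | ⟨hxy', he'⟩
  · obtain rfl : x = x' := by omega
    exact ⟨Option.some_inj.1 (hs.symm.trans hs'), rfl⟩
  · obtain rfl : x = k := by omega
    exact absurd (he'.closesAt_eq_some (by omega)) (by simp [closesAt_eq_none_of_shortAt hs])
  · obtain rfl : x' = k := by omega
    exact absurd (he.closesAt_eq_some (by omega)) (by simp [closesAt_eq_none_of_shortAt hs'])
  · obtain rfl := Option.some_inj.1
      ((he.closesAt_eq_some (by omega)).symm.trans (he'.closesAt_eq_some (by omega)))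
    exact ⟨rfl, he.left_unique_s5 he'⟩

theorem IsWalkArc.not_crossing (h : IsWalkArc w c x y) (h' : IsWalkArc w c x' y') (hxx' : x < x')
    (hx'y : x' < y) (hyy' : y < y') : False := by
  rcases h with ⟨rfl, _⟩ | ⟨_, _, hy, hmin⟩
  · omega
  rcases h' with ⟨rfl, _⟩ | ⟨_, _, _, hmin'⟩
  · omega
  have := hmin x' hxx' hx'y
  have := hmin' y hx'y hyy'
  omega

variable (hw : IsClosedWalk w)
include hw

theorem opensAt_eq_some_iff : opensAt w k = some c ↔ ∃ y, k + 1 < y ∧ IsWalkArc w c k y := by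
  refine ⟨fun h => ?_, fun ⟨y, hky, hy⟩ => ?_⟩
  · have hup : walkPos w k c < walkPos w (k + 1) c := by rw [walkPos_succ_of_opensAt h]; omega
    obtain ⟨y, hy⟩ := exists_isExcursion_of_lt_succ (f := (walkPos w · c))
      (fun j => walkPos_sub_one_le j c) hup (lt_of_opensAt_eq_some h)
      (by rw [hw.2 c]; exact hw.1 k c)
    have hky : k + 1 ≠ y := fun h => by
      have : walkPos w (k + 1) c = walkPos w k c := h ▸ hy.2.1
      omega
    exact ⟨y, by have := hy.1; omega, .inr ⟨by have := hy.1; omega, hy⟩⟩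
  · rcases hy with ⟨rfl, _⟩ | ⟨_, he⟩
    · omega
    · exact he.opensAt_eq_some hky

theorem closesAt_eq_some_iff :
    closesAt w k = some c ↔ ∃ x, x < k ∧ IsWalkArc w c x (k + 1) := by
  refine ⟨fun h => ?_, fun ⟨x, hxk, hx⟩ => ?_⟩
  · have hdown : walkPos w (k + 1) c < walkPos w k c := by rw [walkPos_succ_of_closesAt h]; omega
    obtain ⟨x, hx⟩ := exists_isExcursion_of_succ_lt (f := (walkPos w · c))
      (fun j => walkPos_succ_le j c) hdown (by rw [walkPos_zero]; exact hw.1 (k + 1) c)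
    have hxk : x ≠ k := fun h => by
      have : walkPos w (k + 1) c = walkPos w k c := h ▸ hx.2.1
      omega
    exact ⟨x, by have := hx.1; omega, .inr ⟨by have := hx.1; omega, hx⟩⟩
  · rcases hx with ⟨hk, _⟩ | ⟨_, he⟩
    · omega
    · exact he.closesAt_eq_some hxk

end Walk

namespace ColoredPartition

variable {n r : ℕ} (Λ : ColoredPartition n r)

def HasArc (c : Fin r) (x y : Fin n) : Prop :=
  ∃ h : IsArc Λ.P x y, Λ.color x y h = c

noncomputable def shortColor (k : ℕ) : Option (Fin r) :=
  optionChoose fun c => ∃ x y : Fin n, x.1 = k ∧ y.1 = k + 1 ∧ Λ.HasArc c x y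

noncomputable def openColor (k : ℕ) : Option (Fin r) :=
  optionChoose fun c => ∃ x y : Fin n, x.1 = k ∧ k + 1 < y.1 ∧ Λ.HasArc c x y

noncomputable def closeColor (k : ℕ) : Option (Fin r) :=
  optionChoose fun c => ∃ x y : Fin n, x.1 < k ∧ y.1 = k + 1 ∧ Λ.HasArc c x y

open Classical in
noncomputable def height (c : Fin r) (k : ℕ) : ℕ :=
  #{z : Fin n × Fin n | z.1.1 < k ∧ k < z.2.1 ∧ Λ.HasArc c z.1 z.2}

variable {Λ} {c c' : Fin r} {x x' y y' : Fin n}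

theorem HasArc.lt (h : Λ.HasArc c x y) : x < y := h.1.1

theorem HasArc.right_unique_s5 (h : Λ.HasArc c x y) (h' : Λ.HasArc c' x y') : c = c' ∧ y = y' := by
  obtain ⟨ha, rfl⟩ := h
  obtain ⟨ha', rfl⟩ := h'
  obtain rfl := ha.right_unique_s5 ha'
  exact ⟨rfl, rfl⟩

theorem HasArc.left_unique_s5 (h : Λ.HasArc c x y) (h' : Λ.HasArc c' x' y) : c = c' ∧ x = x' := by
  obtain ⟨ha, rfl⟩ := h
  obtain ⟨ha', rfl⟩ := h'
  obtain rfl := ha.left_unique_s5 ha'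
  exact ⟨rfl, rfl⟩

theorem hasCrossing_two (h : Λ.HasArc c x y) (h' : Λ.HasArc c x' y') (hxx' : x < x')
    (hx'y : x' < y) (hyy' : y < y') : HasCrossing Λ 2 := by
  refine ⟨![x, x'], ![y, y'], c, ?_, ?_, ?_, ?_⟩
  · exact Fin.strictMono_iff_lt_succ.2 fun i => by fin_cases i; exact hxx'
  · exact Fin.strictMono_iff_lt_succ.2 fun i => by fin_cases i; exact hyy'
  · intro s t
    fin_cases s <;> fin_cases t
    exacts [h.lt, h.lt.trans hyy', hx'y, hx'y.trans hyy']
  · intro t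
    fin_cases t
    exacts [h, h']

theorem HasArc.lt_of_lt_of_lt (hnc : ¬HasCrossing Λ 2) (h : Λ.HasArc c x y)
    (h' : Λ.HasArc c x' y') (hxx' : x < x') (hx'y : x' < y) : y' < y := by
  rcases lt_trichotomy y' y with hlt | rfl | hgt
  · exact hlt
  · exact absurd (h.left_unique_s5 h').2 hxx'.ne
  · exact absurd (hasCrossing_two h h' hxx' hx'y hgt) hnc

theorem ext_hasArc {Λ Λ' : ColoredPartition n r}
    (h : ∀ c x y, Λ.HasArc c x y ↔ Λ'.HasArc c x y) :
    Λ = Λ' := by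
  have hP : Λ.P = Λ'.P := Finpartition.eq_of_isArc_eq <| funext₂ fun x y => propext
    ⟨fun hxy => ((h _ x y).1 ⟨hxy, rfl⟩).1, fun hxy => ((h _ x y).2 ⟨hxy, rfl⟩).1⟩
  obtain ⟨P, color⟩ := Λ
  obtain ⟨P', color'⟩ := Λ'
  obtain rfl : P = P' := hP
  congr
  funext x y hxy
  obtain ⟨_, hc⟩ := (h _ x y).1 ⟨hxy, rfl⟩
  exact hc.symm

variable {k : ℕ}

theorem shortColor_eq_some :
    Λ.shortColor k = some c ↔ ∃ x y : Fin n, x.1 = k ∧ y.1 = k + 1 ∧ Λ.HasArc c x y :=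
  optionChoose_eq_some fun _ _ ⟨_, _, hx, _, h⟩ ⟨_, _, hx', _, h'⟩ =>
    (h.right_unique_s5 (Fin.ext (hx'.trans hx.symm) ▸ h')).1

theorem openColor_eq_some :
    Λ.openColor k = some c ↔ ∃ x y : Fin n, x.1 = k ∧ k + 1 < y.1 ∧ Λ.HasArc c x y :=
  optionChoose_eq_some fun _ _ ⟨_, _, hx, _, h⟩ ⟨_, _, hx', _, h'⟩ =>
    (h.right_unique_s5 (Fin.ext (hx'.trans hx.symm) ▸ h')).1

theorem closeColor_eq_some :
    Λ.closeColor k = some c ↔ ∃ x y : Fin n, x.1 < k ∧ y.1 = k + 1 ∧ Λ.HasArc c x y :=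
  optionChoose_eq_some fun _ _ ⟨_, _, _, hy, h⟩ ⟨_, _, _, hy', h'⟩ =>
    (h.left_unique_s5 (Fin.ext (hy'.trans hy.symm) ▸ h')).1

theorem openColor_eq_none_of_shortColor (h : Λ.shortColor k ≠ none) : Λ.openColor k = none := by
  obtain ⟨c, hc⟩ := Option.ne_none_iff_exists'.1 h
  obtain ⟨x, y, rfl, hy, hxy⟩ := shortColor_eq_some.1 hc
  refine Option.eq_none_iff_forall_ne_some.2 fun c' hc' => ?_
  obtain ⟨x', y', hx', hy', hxy'⟩ := openColor_eq_some.1 hc'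
  obtain rfl : x' = x := Fin.ext hx'
  obtain rfl := (hxy.right_unique_s5 hxy').2
  omega

theorem closeColor_eq_none_of_shortColor (h : Λ.shortColor k ≠ none) :
    Λ.closeColor k = none := by
  obtain ⟨c, hc⟩ := Option.ne_none_iff_exists'.1 h
  obtain ⟨x, y, rfl, hy, hxy⟩ := shortColor_eq_some.1 hc
  refine Option.eq_none_iff_forall_ne_some.2 fun c' hc' => ?_
  obtain ⟨x', y', hx', hy', hxy'⟩ := closeColor_eq_some.1 hc'
  obtain rfl : y' = y := Fin.ext (hy'.trans hy.symm)
  obtain rfl := (hxy.left_unique_s5 hxy').2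
  omega

theorem closeColor_ne_of_openColor (hnc : ¬HasCrossing Λ 2) (h : Λ.openColor k = some c) :
    Λ.closeColor k ≠ some c := fun h' => by
  obtain ⟨x, y, hx, hy, hxy⟩ := openColor_eq_some.1 h
  obtain ⟨x', y', hx', hy', hxy'⟩ := closeColor_eq_some.1 h'
  exact hnc (hasCrossing_two hxy' hxy (Fin.lt_def.2 (by omega)) (Fin.lt_def.2 (by omega))
    (Fin.lt_def.2 (by omega)))

open Classical in
theorem card_openingArcs :
    #{z : Fin n × Fin n | z.1.1 = k ∧ k + 1 < z.2.1 ∧ Λ.HasArc c z.1 z.2} =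
      if Λ.openColor k = some c then 1 else 0 := by
  refine card_eq_ite_of_subsingleton (fun ⟨x, y⟩ ha ⟨x', y'⟩ hb => ?_) ?_
  · simp only [mem_filter, mem_univ, true_and] at ha hb
    obtain rfl : x = x' := Fin.ext (ha.1.trans hb.1.symm)
    rw [(ha.2.2.right_unique_s5 hb.2.2).2]
  · simp [openColor_eq_some, Finset.Nonempty]

open Classical in
theorem card_closingArcs :
    #{z : Fin n × Fin n | z.1.1 < k ∧ z.2.1 = k + 1 ∧ Λ.HasArc c z.1 z.2} =
      if Λ.closeColor k = some c then 1 else 0 := by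
  refine card_eq_ite_of_subsingleton (fun ⟨x, y⟩ ha ⟨x', y'⟩ hb => ?_) ?_
  · simp only [mem_filter, mem_univ, true_and] at ha hb
    obtain rfl : y = y' := Fin.ext (ha.2.1.trans hb.2.1.symm)
    rw [(ha.2.2.left_unique_s5 hb.2.2).2]
  · simp [closeColor_eq_some, Finset.Nonempty]

theorem height_succ (c : Fin r) (k : ℕ) :
    (Λ.height c (k + 1) : ℤ) = Λ.height c k + ((if Λ.openColor k = some c then 1 else 0) -
      (if Λ.closeColor k = some c then 1 else 0)) := by
  classical
  have hsum : Λ.height c (k + 1) +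
      #{z : Fin n × Fin n | z.1.1 < k ∧ z.2.1 = k + 1 ∧ Λ.HasArc c z.1 z.2} =
      Λ.height c k +
        #{z : Fin n × Fin n | z.1.1 = k ∧ k + 1 < z.2.1 ∧ Λ.HasArc c z.1 z.2} := by
    unfold height
    rw [← card_union_of_disjoint, ← card_union_of_disjoint, ← filter_or, ← filter_or]
    · congr 1
      apply filter_congr
      intro z _
      by_cases hz : Λ.HasArc c z.1 z.2
      · simp only [hz, and_true]
        omega
      · simp [hz]
    all_goals exact disjoint_filter.2 fun z _ h1 h2 => by omega
  rw [card_openingArcs, card_closingArcs] at hsum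
  split_ifs at hsum ⊢ <;> omega

end ColoredPartition

namespace ColoredPartition

variable {m r : ℕ}

noncomputable def toWalk (Λ : ColoredPartition (m + 1) r) : Fin m → Step r :=
  fun i => Step.ofColors (Λ.shortColor i) (Λ.openColor i) (Λ.closeColor i)

variable {Λ : ColoredPartition (m + 1) r} {c : Fin r} {x y : Fin (m + 1)}

theorem shortAt_toWalk (k : ℕ) : shortAt Λ.toWalk k = Λ.shortColor k := by
  unfold shortAt
  split_ifs with hk
  · exact Step.short_ofColors ..
  · refine (Option.eq_none_iff_forall_ne_some.2 fun c hc => ?_).symm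
    obtain ⟨_, y, _, hy, _⟩ := shortColor_eq_some.1 hc
    omega

theorem opensAt_toWalk (k : ℕ) : opensAt Λ.toWalk k = Λ.openColor k := by
  unfold opensAt
  split_ifs with hk
  · exact Step.opens_ofColors _ _ _ openColor_eq_none_of_shortColor
  · refine (Option.eq_none_iff_forall_ne_some.2 fun c hc => ?_).symm
    obtain ⟨_, y, _, hy, _⟩ := openColor_eq_some.1 hc
    omega

theorem closesAt_toWalk (hnc : ¬HasCrossing Λ 2) (k : ℕ) :
    closesAt Λ.toWalk k = Λ.closeColor k := by
  unfold closesAt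
  split_ifs with hk
  · exact Step.closes_ofColors _ _ _ closeColor_eq_none_of_shortColor
      fun _ => closeColor_ne_of_openColor hnc
  · refine (Option.eq_none_iff_forall_ne_some.2 fun c hc => ?_).symm
    obtain ⟨_, y, _, hy, _⟩ := closeColor_eq_some.1 hc
    omega

theorem walkPos_toWalk (hnc : ¬HasCrossing Λ 2) (k : ℕ) (c : Fin r) :
    walkPos Λ.toWalk k c = Λ.height c k := by
  induction k with
  | zero => simp [walkPos_zero, height]
  | succ k ih => rw [walkPos_succ, ih, height_succ, opensAt_toWalk, closesAt_toWalk hnc]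

theorem isClosedWalk_toWalk (hnc : ¬HasCrossing Λ 2) : IsClosedWalk Λ.toWalk := by
  classical
  refine ⟨fun k c => walkPos_toWalk hnc k c ▸ Int.natCast_nonneg _, fun c => ?_⟩
  rw [walkPos_toWalk hnc, Nat.cast_eq_zero, height, card_eq_zero]
  exact filter_eq_empty_iff.2 fun z _ ⟨_, hz, _⟩ => by omega

theorem HasArc.isExcursion_height (hnc : ¬HasCrossing Λ 2) (h : Λ.HasArc c x y) :
    IsExcursion (fun k => (Λ.height c k : ℤ)) x y := by
  classical
  refine ⟨h.lt, ?_, fun k hxk hky => ?_⟩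
  · simp only [Nat.cast_inj, height]
    congr 1
    ext ⟨x', y'⟩
    simp only [mem_filter, mem_univ, true_and, ← and_assoc, and_congr_left_iff, Fin.val_fin_lt]
    intro h'
    constructor
    · rintro ⟨hx'y, hyy'⟩
      refine ⟨lt_of_not_ge fun hxx' => ?_, h.lt.trans hyy'⟩
      rcases hxx'.eq_or_lt with rfl | hxx'
      · exact hyy'.ne (h.right_unique_s5 h').2
      · exact (h.lt_of_lt_of_lt hnc h' hxx' hx'y).not_gt hyy'
    · rintro ⟨hx'x, hxy'⟩
      exact ⟨hx'x.trans h.lt, h'.lt_of_lt_of_lt hnc h hx'x hxy'⟩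
  · simp only [Nat.cast_lt, height]
    refine card_lt_card ((ssubset_iff_of_subset ?_).2 ⟨(x, y), ?_, ?_⟩)
    · rintro ⟨x', y'⟩ hz
      simp only [mem_filter, mem_univ, true_and, Fin.val_fin_lt] at hz ⊢
      obtain ⟨hx'x, hxy', h'⟩ := hz
      exact ⟨(Fin.lt_def.1 hx'x).trans hxk, hky.trans (h'.lt_of_lt_of_lt hnc h hx'x hxy'), h'⟩
    · simp [hxk, hky, h]
    · simp

theorem hasArc_iff_isWalkArc (hnc : ¬HasCrossing Λ 2) :
    Λ.HasArc c x y ↔ IsWalkArc Λ.toWalk c x y := by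
  have hexc : ∀ {y}, Λ.HasArc c x y → IsExcursion (walkPos Λ.toWalk · c) x y := fun h => by
    simpa only [walkPos_toWalk hnc] using h.isExcursion_height hnc
  constructor
  · intro h
    rcases (Nat.succ_le_of_lt h.lt).eq_or_lt with hy | hy
    · exact .inl ⟨hy.symm,
        (shortAt_toWalk _).trans (shortColor_eq_some.2 ⟨x, y, rfl, hy.symm, h⟩)⟩
    · exact .inr ⟨hy, hexc h⟩
  · rintro (⟨hy, hs⟩ | ⟨hxy, he⟩)
    · obtain ⟨x', y', hx', hy', h⟩ := shortColor_eq_some.1 ((shortAt_toWalk _).symm.trans hs)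
      rwa [Fin.ext hx', Fin.ext (hy'.trans hy.symm)] at h
    · obtain ⟨x', y', hx', -, h⟩ :=
        openColor_eq_some.1 ((opensAt_toWalk _).symm.trans (he.opensAt_eq_some hxy))
      obtain rfl : x' = x := Fin.ext hx'
      obtain rfl : y' = y := Fin.ext ((hexc h).right_unique_s5 he)
      exact h

variable {w : Fin m → Step r}

variable (w) in
open Classical in
noncomputable def walkPartition : Finpartition (univ : Finset (Fin (m + 1))) :=
  Finpartition.ofSetoid (EqvGen.setoid fun x y : Fin (m + 1) => ∃ c, IsWalkArc w c x y)

theorem isArc_walkPartition_iff : IsArc (walkPartition w) x y ↔ ∃ c, IsWalkArc w c x y := by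
  classical
  exact Finpartition.isArc_ofSetoid_eqvGen_iff (fun _ _ ⟨_, h⟩ => h.lt)
    (fun _ _ _ ⟨_, h⟩ ⟨_, h'⟩ => Fin.ext (h.left_unique_s5 h').2)
    (fun _ _ _ ⟨_, h⟩ ⟨_, h'⟩ => Fin.ext (h.right_unique_s5 h').2)

variable (w) in
noncomputable def ofWalk : ColoredPartition (m + 1) r where
  P := walkPartition w
  color _ _ h := (isArc_walkPartition_iff.1 h).choose

theorem hasArc_ofWalk_iff : (ofWalk w).HasArc c x y ↔ IsWalkArc w c x y := by
  have hcolor : ∀ h, IsWalkArc w ((ofWalk w).color x y h) x y := fun h =>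
    (isArc_walkPartition_iff.1 h).choose_spec
  constructor
  · rintro ⟨h, rfl⟩
    exact hcolor h
  · intro h
    have harc : IsArc (ofWalk w).P x y := isArc_walkPartition_iff.2 ⟨c, h⟩
    exact ⟨harc, ((hcolor harc).right_unique_s5 h).1⟩

theorem not_hasCrossing_ofWalk : ¬HasCrossing (ofWalk w) 2 := by
  rintro ⟨f, g, c, hf, hg, hfg, harc⟩
  exact (hasArc_ofWalk_iff.1 (harc 0)).not_crossing (hasArc_ofWalk_iff.1 (harc 1))
    (hf Fin.zero_lt_one) (hfg 1 0) (hg Fin.zero_lt_one)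

section ArcsOfWalk

variable (hΛ : ∀ c x y, Λ.HasArc c x y ↔ IsWalkArc w c x y)
include hΛ

theorem shortColor_eq_shortAt (k : ℕ) : Λ.shortColor k = shortAt w k := by
  refine Option.ext fun c => shortColor_eq_some.trans ⟨?_, fun hs => ?_⟩
  · rintro ⟨x, y, rfl, hy, hxy⟩
    rw [← isWalkArc_succ_iff, ← hy]
    exact (hΛ c x y).1 hxy
  · have hk := lt_of_shortAt_eq_some hs
    exact ⟨⟨k, by omega⟩, ⟨k + 1, by omega⟩, rfl, rfl,
      (hΛ c _ _).2 (isWalkArc_succ_iff.2 hs)⟩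

variable (hw : IsClosedWalk w)
include hw

theorem openColor_eq_opensAt (k : ℕ) : Λ.openColor k = opensAt w k := by
  refine Option.ext fun c => openColor_eq_some.trans ⟨?_, fun ho => ?_⟩
  · rintro ⟨x, y, rfl, hy, hxy⟩
    exact (opensAt_eq_some_iff hw).2 ⟨y, hy, (hΛ c x y).1 hxy⟩
  · obtain ⟨y, hky, hy⟩ := (opensAt_eq_some_iff hw).1 ho
    have hym := hy.le
    exact ⟨⟨k, by omega⟩, ⟨y, by omega⟩, rfl, hky, (hΛ c _ _).2 hy⟩

theorem closeColor_eq_closesAt (k : ℕ) : Λ.closeColor k = closesAt w k := by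
  refine Option.ext fun c => closeColor_eq_some.trans ⟨?_, fun hc => ?_⟩
  · rintro ⟨x, y, hx, hy, hxy⟩
    exact (closesAt_eq_some_iff hw).2 ⟨x, hx, hy ▸ (hΛ c x y).1 hxy⟩
  · obtain ⟨x, hxk, hx⟩ := (closesAt_eq_some_iff hw).1 hc
    have hkm := hx.le
    exact ⟨⟨x, by omega⟩, ⟨k + 1, by omega⟩, hxk, rfl, (hΛ c _ _).2 hx⟩

theorem toWalk_eq : Λ.toWalk = w := by
  funext k
  rw [toWalk, shortColor_eq_shortAt hΛ, openColor_eq_opensAt hΛ hw, closeColor_eq_closesAt hΛ hw]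
  simp only [shortAt, opensAt, closesAt, k.2, dif_pos, Step.ofColors_short_opens_closes]

end ArcsOfWalk

end ColoredPartition

open ColoredPartition in
noncomputable def noncrossingEquivClosedWalk (m r : ℕ) :
    {Λ : ColoredPartition (m + 1) r // ¬HasCrossing Λ 2} ≃
      {w : Fin m → Step r // IsClosedWalk w} where
  toFun Λ := ⟨Λ.1.toWalk, isClosedWalk_toWalk Λ.2⟩
  invFun w := ⟨ofWalk w.1, not_hasCrossing_ofWalk⟩
  left_inv Λ := Subtype.ext <| ext_hasArc fun _ _ _ =>
    hasArc_ofWalk_iff.trans (hasArc_iff_isWalkArc Λ.2).symm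
  right_inv w := Subtype.ext <| toWalk_eq (fun _ _ _ => hasArc_ofWalk_iff) w.2

theorem stmt5_general (n r : ℕ) (hn : 0 < n) :
    Nat.card {Λ : ColoredPartition n r // ¬HasCrossing Λ 2} =
      Nat.card {w : Fin (n - 1) → Step r // IsClosedWalk w} := by
  obtain ⟨m, rfl⟩ : ∃ m, n = m + 1 := ⟨n - 1, by omega⟩
  exact Nat.card_congr (noncrossingEquivClosedWalk m r)

/-- The number of `r`-colored noncrossing partitions of `[n]` equals the number of
`(n−1)`-step closed walks at the origin in `ℕ^r` with steps `±e_i`, `e_i − e_j`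
(`i ≠ j`) and `r+1` distinct zero steps. -/
theorem stmt5 (n r : ℕ) (hn : 0 < n) (hr : 0 < r) :
    Nat.card {Λ : ColoredPartition n r // ¬HasCrossing Λ 2} =
      Nat.card {w : Fin (n - 1) → Step r // IsClosedWalk w} :=
  stmt5_general n r hn
end

section
/- For fixed positive integers j, k, n with j, k ≥ 2 and fixed subsets S, T ⊆ [n], the number NCN^{S,T}_{j,k}(n, r) of r-colored partitions Λ of [n] with cr(Λ) < j, ne(Λ) < k, min(Λ) = S, max(Λ) = T agrees, as a function of the positive integer r, with a polynomial in r with integer coefficients. -/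
open Finset

/-!
Crossings and nestings of a colored partition depend on its coloring only through the
kernel of the coloring, the equivalence relation "same color" on the arcs. Grouping the
colorings of a partition `P` by their kernel `s`, the colorings with kernel `s` are the
injections of the arc classes into `[r]`, so there are `r (r - 1) ⋯ (r - |Arc P / s| + 1)` of
them, and the count is a finite sum of such polynomials in `r`.
-/

namespace Setoid

variable {α β : Type*}

def kerEqEquivEmbedding (s : Setoid α) : {F : α → β // ker F = s} ≃ (Quotient s ↪ β) where
  toFun F := ⟨Quotient.lift F.1 fun _ _ h => by rw [← ker_def (f := F.1), F.2]; exact h,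
    fun x y => Quotient.inductionOn₂ x y fun _ _ h => Quotient.sound (by rw [← F.2]; exact h)⟩
  invFun e := ⟨e ∘ Quotient.mk s, ext fun _ _ => e.injective.eq_iff.trans Quotient.eq⟩
  left_inv _ := rfl
  right_inv e := Function.Embedding.ext fun q => Quotient.inductionOn q fun _ => rfl

instance [Finite α] : Finite (Setoid α) :=
  Finite.of_injective (fun s : Setoid α => s.r) fun _ _ h =>
    ext fun a b => iff_of_eq (congrFun₂ h a b)

/-- The number of maps `α → Fin r` whose kernel satisfies `G` is `∑ r (r-1) ⋯ (r-|α/s|+1)`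
over the equivalence relations `s` satisfying `G`. -/
theorem exists_polynomial_natCard_subtype_ker [Finite α] (G : Setoid α → Prop) :
    ∃ p : Polynomial ℤ, ∀ r : ℕ,
      (Nat.card {F : α → Fin r // G (ker F)} : ℤ) = p.eval (r : ℤ) := by
  classical
  have := Fintype.ofFinite {s // G s}
  refine ⟨∑ s : {s // G s}, descPochhammer ℤ (Nat.card (Quotient s.1)), fun r => ?_⟩
  rw [← Nat.card_congr (Equiv.sigmaSubtypeFiberEquivSubtype ker fun _ => Iff.rfl),
    Nat.card_sigma, Polynomial.eval_finsetSum]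
  push_cast
  refine Finset.sum_congr rfl fun s _ => ?_
  have := Fintype.ofFinite (Quotient s.1)
  rw [Nat.card_congr (kerEqEquivEmbedding s.1), Nat.card_eq_fintype_card,
    Fintype.card_embedding_eq, Fintype.card_fin, Nat.card_eq_fintype_card,
    descPochhammer_eval_eq_descFactorial]

end Setoid

section ColoredPartition

variable {n r : ℕ}

abbrev Arc (P : Finpartition (Finset.univ : Finset (Fin n))) : Type :=
  {p : Fin n × Fin n // IsArc P p.1 p.2}

def ColoredPartition.arcColor (Λ : ColoredPartition n r) : Arc Λ.P → Fin r :=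
  fun a => Λ.color a.1.1 a.1.2 a.2

def IsMonochromatic {m : ℕ} (P : Finpartition (Finset.univ : Finset (Fin n)))
    (s : Setoid (Arc P)) (f g : Fin m → Fin n) : Prop :=
  ∃ H : ∀ t, IsArc P (f t) (g t), ∀ a b, s ⟨(f a, g a), H a⟩ ⟨(f b, g b), H b⟩

theorem ColoredPartition.exists_color_iff_isMonochromatic {m : ℕ} (Λ : ColoredPartition n r)
    (hm : 0 < m) (f g : Fin m → Fin n) :
    (∃ c, ∀ t, ∃ h : IsArc Λ.P (f t) (g t), Λ.color (f t) (g t) h = c) ↔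
      IsMonochromatic Λ.P (Setoid.ker Λ.arcColor) f g := by
  constructor
  · rintro ⟨c, hc⟩
    exact ⟨fun t => (hc t).1, fun a b => (hc a).choose_spec.trans (hc b).choose_spec.symm⟩
  · rintro ⟨H, hs⟩
    exact ⟨Λ.arcColor ⟨_, H ⟨0, hm⟩⟩, fun t => ⟨H t, hs t ⟨0, hm⟩⟩⟩

def ColoredPartition.subtypeEquivSigma
    (G : ∀ P : Finpartition (Finset.univ : Finset (Fin n)), Setoid (Arc P) → Prop) :
    {Λ : ColoredPartition n r // G Λ.P (Setoid.ker Λ.arcColor)} ≃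
      Σ P, {F : Arc P → Fin r // G P (Setoid.ker F)} where
  toFun Λ := ⟨Λ.1.P, Λ.1.arcColor, Λ.2⟩
  invFun x := ⟨⟨x.1, fun i j h => x.2.1 ⟨(i, j), h⟩⟩, x.2.2⟩
  left_inv _ := rfl
  right_inv _ := rfl

variable (P : Finpartition (Finset.univ : Finset (Fin n))) (s : Setoid (Arc P))

noncomputable def crNumOf : ℕ :=
  sSup {m | 0 < m ∧ ∃ f g : Fin m → Fin n, StrictMono f ∧ StrictMono g ∧
    (∀ a b, f a < g b) ∧ IsMonochromatic P s f g}

noncomputable def neNumOf : ℕ :=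
  sSup {m | 0 < m ∧ ∃ f g : Fin m → Fin n, StrictMono f ∧ StrictAnti g ∧
    (∀ a b, f a < g b) ∧ IsMonochromatic P s f g}

theorem crNum_eq_crNumOf (Λ : ColoredPartition n r) :
    crNum Λ = crNumOf Λ.P (Setoid.ker Λ.arcColor) := by
  unfold crNum crNumOf HasCrossing
  congr 1; ext m
  refine and_congr_right fun hm => exists₂_congr fun f g => ?_
  simp only [exists_and_left, Λ.exists_color_iff_isMonochromatic hm]

theorem neNum_eq_neNumOf (Λ : ColoredPartition n r) :
    neNum Λ = neNumOf Λ.P (Setoid.ker Λ.arcColor) := by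
  unfold neNum neNumOf HasNesting
  congr 1; ext m
  refine and_congr_right fun hm => exists₂_congr fun f g => ?_
  simp only [exists_and_left, Λ.exists_color_iff_isMonochromatic hm]

end ColoredPartition

theorem stmt9_general (n j k : ℕ) (S T : Set (Fin n)) :
    ∃ p : Polynomial ℤ, ∀ r : ℕ, 0 < r →
      (Nat.card {Λ : ColoredPartition n r //
          crNum Λ < j ∧ neNum Λ < k ∧ blockMin Λ.P = S ∧ blockMax Λ.P = T} : ℤ) =
        p.eval (r : ℤ) := by
  classical
  let G P (s : Setoid (Arc P)) : Prop :=
    crNumOf P s < j ∧ neNumOf P s < k ∧ blockMin P = S ∧ blockMax P = T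
  choose p hp using fun P => Setoid.exists_polynomial_natCard_subtype_ker (G P)
  refine ⟨∑ P, p P, fun r _ => ?_⟩
  simp_rw [crNum_eq_crNumOf, neNum_eq_neNumOf]
  rw [Nat.card_congr (ColoredPartition.subtypeEquivSigma G), Nat.card_sigma,
    Polynomial.eval_finsetSum]
  push_cast
  exact Finset.sum_congr rfl fun P _ => hp P r

/-- `NCN^{S,T}_{j,k}(n,r)` is a polynomial in `r` with integer coefficients. -/
theorem stmt9 (n j k : ℕ) (hj : 2 ≤ j) (hk : 2 ≤ k) (S T : Set (Fin n)) :
    ∃ p : Polynomial ℤ, ∀ r : ℕ, 0 < r →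
      (Nat.card {Λ : ColoredPartition n r //
          crNum Λ < j ∧ neNum Λ < k ∧ blockMin Λ.P = S ∧ blockMax Λ.P = T} : ℤ) =
        p.eval (r : ℤ) :=
  stmt9_general n j k S T
end
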